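/- arXiv:1504.07390 — 2 statements merged into one kernel-verified Lean document; each statement's English description precedes it below -/
import Mathlib

section
/- For a standard normal random variable X, positive reals σ₀, κ, Δ, and η > 0 with η < 1 + 1/κ², the expectation E[exp(η(κ²σ₀²X² + 2σ₀XΔ - Δ²)/(2(1+κ²)σ₀²))] equals (√(1+κ²)/√(1+(1-η)κ²)) · exp(η(η-1)Δ²/(2σ₀²(1+(1-η)κ²))). -/
/-! The exponent is a quadratic polynomial `a X² + c X + d` in the standard normal `X`, with
`1 - 2a = (1 + (1 - η)κ²)/(1 + κ²)`, so the moment is a Gaussian integral computed by completing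
the square; it is finite exactly when `a < 1/2`, i.e. `η < 1 + 1/κ²`. -/

open MeasureTheory ProbabilityTheory Real

theorem integral_exp_quadratic {b : ℝ} (hb : b < 0) (c d : ℝ) :
    ∫ x : ℝ, exp (b * x ^ 2 + c * x + d) = √(π / -b) * exp (d - c ^ 2 / (4 * b)) := by
  have hb0 : b ≠ 0 := hb.ne
  have complete_square : ∀ x : ℝ,
      b * x ^ 2 + c * x + d = -(-b) * (x + c / (2 * b)) ^ 2 + (d - c ^ 2 / (4 * b)) := by
    intro x
    field_simp
    ring
  simp_rw [complete_square, exp_add, integral_mul_const]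
  rw [integral_add_right_eq_self (fun x ↦ exp (-(-b) * x ^ 2)), integral_gaussian]

theorem integral_exp_quadratic_gaussianReal {a : ℝ} (ha : a < 1 / 2) (c d : ℝ) :
    ∫ x, exp (a * x ^ 2 + c * x + d) ∂gaussianReal 0 1
      = exp (d + c ^ 2 / (2 * (1 - 2 * a))) / √(1 - 2 * a) := by
  have h2a : 0 < 1 - 2 * a := by linarith
  have density_mul : ∀ x : ℝ, gaussianPDFReal 0 1 x * exp (a * x ^ 2 + c * x + d)
      = (√(2 * π))⁻¹ * exp ((a - 1 / 2) * x ^ 2 + c * x + d) := by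
    intro x
    rw [gaussianPDFReal, mul_assoc, ← exp_add, NNReal.coe_one, mul_one]
    ring_nf
  have sqrt_ratio : (√(2 * π))⁻¹ * √(π / -(a - 1 / 2)) = (√(1 - 2 * a))⁻¹ := by
    rw [show π / -(a - 1 / 2) = 2 * π / (1 - 2 * a) by
      rw [div_eq_div_iff (by linarith) h2a.ne']; ring,
      sqrt_div (by positivity), div_eq_mul_inv, ← mul_assoc,
      inv_mul_cancel₀ (by positivity), one_mul]
  rw [integral_gaussianReal_eq_integral_smul one_ne_zero]
  simp_rw [smul_eq_mul, density_mul]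
  rw [integral_const_mul, integral_exp_quadratic (by linarith), ← mul_assoc, sqrt_ratio,
    inv_mul_eq_div, show 4 * (a - 1 / 2) = -(2 * (1 - 2 * a)) by ring, div_neg, sub_neg_eq_add]

theorem integral_exp_quadratic_of_map_eq_gaussianReal {Ω : Type*} [MeasurableSpace Ω]
    {P : Measure Ω} {X : Ω → ℝ} (hX : P.map X = gaussianReal 0 1) {a : ℝ} (ha : a < 1 / 2)
    (c d : ℝ) :
    ∫ ω, exp (a * X ω ^ 2 + c * X ω + d) ∂P
      = exp (d + c ^ 2 / (2 * (1 - 2 * a))) / √(1 - 2 * a) := by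
  have hXae : AEMeasurable X P :=
    .of_map_ne_zero (by rw [hX]; exact IsProbabilityMeasure.ne_zero _)
  rw [← integral_exp_quadratic_gaussianReal ha, ← hX, integral_map hXae (by fun_prop)]

theorem one_add_one_sub_mul_sq_pos {κ η : ℝ} (hκ : κ ≠ 0) (hη : η < 1 + 1 / κ ^ 2) :
    0 < 1 + (1 - η) * κ ^ 2 := by
  have hκ2 : 0 < κ ^ 2 := by positivity
  have := mul_lt_mul_of_pos_right hη hκ2
  rw [add_mul, one_div, inv_mul_cancel₀ hκ2.ne', one_mul] at this
  linarith

theorem moment_likelihood_ratio_general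
    {Ω : Type*} [MeasurableSpace Ω] (P : Measure Ω)
    (X : Ω → ℝ) (hX : P.map X = gaussianReal 0 1)
    (σ₀ κ Δ η : ℝ) (hσ₀ : 0 < σ₀) (hκ : 0 < κ)
    (hη' : η < 1 + 1 / κ ^ 2) :
    ∫ ω, Real.exp (η * (κ ^ 2 * σ₀ ^ 2 * (X ω) ^ 2 + 2 * σ₀ * X ω * Δ - Δ ^ 2)
        / (2 * (1 + κ ^ 2) * σ₀ ^ 2)) ∂P
      = Real.sqrt (1 + κ ^ 2) / Real.sqrt (1 + (1 - η) * κ ^ 2)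
        * Real.exp (η * (η - 1) * Δ ^ 2 / (2 * σ₀ ^ 2 * (1 + (1 - η) * κ ^ 2))) := by
  have hp := one_add_one_sub_mul_sq_pos hκ.ne' hη'
  set a := η * κ ^ 2 / (2 * (1 + κ ^ 2))
  set c := η * Δ / ((1 + κ ^ 2) * σ₀)
  set d := -(η * Δ ^ 2) / (2 * (1 + κ ^ 2) * σ₀ ^ 2)
  have exponent : ∀ x, η * (κ ^ 2 * σ₀ ^ 2 * x ^ 2 + 2 * σ₀ * x * Δ - Δ ^ 2)
      / (2 * (1 + κ ^ 2) * σ₀ ^ 2) = a * x ^ 2 + c * x + d := by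
    intro x
    simp only [a, c, d]
    field_simp
    ring
  have one_sub_two_a : 1 - 2 * a = (1 + (1 - η) * κ ^ 2) / (1 + κ ^ 2) := by
    simp only [a]
    field_simp
    ring
  have ha : a < 1 / 2 := by
    have : 0 < 1 - 2 * a := by rw [one_sub_two_a]; positivity
    linarith
  have exponent_value : d + c ^ 2 / (2 * (1 - 2 * a))
      = η * (η - 1) * Δ ^ 2 / (2 * σ₀ ^ 2 * (1 + (1 - η) * κ ^ 2)) := by
    simp only [one_sub_two_a, c, d]
    generalize hp_def : 1 + (1 - η) * κ ^ 2 = p at hp ⊢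
    field_simp
    linear_combination (η * Δ ^ 2) * hp_def
  simp_rw [exponent]
  rw [integral_exp_quadratic_of_map_eq_gaussianReal hX ha, exponent_value, one_sub_two_a,
    sqrt_div hp.le, div_div_eq_mul_div]
  ring

/-- The `η`-th moment of the single-observation likelihood ratio between
`N(Δ, (1+κ²)σ₀²)` and `N(0, σ₀²)`, computed under the null: for a standard normal `X`,
`σ₀, κ > 0`, `0 < η < 1 + 1/κ²`,
`E[exp(η (κ²σ₀²X² + 2σ₀XΔ - Δ²) / (2(1+κ²)σ₀²))]
  = √(1+κ²)/√(1+(1-η)κ²) · exp(η(η-1)Δ² / (2σ₀²(1+(1-η)κ²)))`. -/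
theorem moment_likelihood_ratio
    {Ω : Type*} [MeasurableSpace Ω] (P : Measure Ω) [IsProbabilityMeasure P]
    (X : Ω → ℝ) (hXmeas : Measurable X) (hX : P.map X = gaussianReal 0 1)
    (σ₀ κ Δ η : ℝ) (hσ₀ : 0 < σ₀) (hκ : 0 < κ) (hΔ : 0 < Δ)
    (hη : 0 < η) (hη' : η < 1 + 1 / κ ^ 2) :
    ∫ ω, Real.exp (η * (κ ^ 2 * σ₀ ^ 2 * (X ω) ^ 2 + 2 * σ₀ * X ω * Δ - Δ ^ 2)
        / (2 * (1 + κ ^ 2) * σ₀ ^ 2)) ∂P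
      = Real.sqrt (1 + κ ^ 2) / Real.sqrt (1 + (1 - η) * κ ^ 2)
        * Real.exp (η * (η - 1) * Δ ^ 2 / (2 * σ₀ ^ 2 * (1 + (1 - η) * κ ^ 2))) :=
  moment_likelihood_ratio_general P X hX σ₀ κ Δ η hσ₀ hκ hη'
end

section
/- The function r defined on (0,∞) by r(c) = √(2+c²)·(c+√(2+3c²)) / (2(1+c²)) attains its maximum value √2 at c = √2, i.e. r(√2) = √2 and r(c) ≤ √2 for all c > 0. -/
/-- The price of adaptation in the equilibrium regime. -/
noncomputable def priceOfAdaptation (c : ℝ) : ℝ :=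
  Real.sqrt (2 + c ^ 2) * (c + Real.sqrt (2 + 3 * c ^ 2)) / (2 * (1 + c ^ 2))

open Real

/-- The gap is the square `((c² - 2)(c² + 1))²`, which vanishes exactly at the maximiser
`c = √2`. -/
lemma mul_sqrt_two_add_three_mul_sq_le (c : ℝ) :
    c * (2 + c ^ 2) * √(2 + 3 * c ^ 2) ≤ 2 + 3 * c ^ 2 + 2 * c ^ 4 := by
  refine (le_abs_self _).trans (abs_le_of_sq_le_sq ?_ (by positivity))
  rw [mul_pow, sq_sqrt (by positivity)]
  nlinarith [sq_nonneg ((c ^ 2 - 2) * (c ^ 2 + 1))]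

lemma sq_sqrt_mul_add_sqrt_le (c : ℝ) :
    (√(2 + c ^ 2) * (c + √(2 + 3 * c ^ 2))) ^ 2 ≤ 8 * (1 + c ^ 2) ^ 2 :=
  calc (√(2 + c ^ 2) * (c + √(2 + 3 * c ^ 2))) ^ 2
      = (2 + c ^ 2) * (2 + 4 * c ^ 2) + 2 * (c * (2 + c ^ 2) * √(2 + 3 * c ^ 2)) := by
        rw [mul_pow, add_sq, sq_sqrt (by positivity), sq_sqrt (by positivity)]; ring
    _ ≤ (2 + c ^ 2) * (2 + 4 * c ^ 2) + 2 * (2 + 3 * c ^ 2 + 2 * c ^ 4) := by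
        gcongr; exact mul_sqrt_two_add_three_mul_sq_le c
    _ = 8 * (1 + c ^ 2) ^ 2 := by ring

lemma priceOfAdaptation_le_sqrt_two (c : ℝ) : priceOfAdaptation c ≤ √2 := by
  rw [priceOfAdaptation, div_le_iff₀ (by positivity)]
  refine (le_abs_self _).trans (abs_le_of_sq_le_sq ?_ (by positivity))
  rw [mul_pow √2, sq_sqrt zero_le_two]
  linarith [sq_sqrt_mul_add_sqrt_le c]

lemma priceOfAdaptation_sqrt_two : priceOfAdaptation √2 = √2 := by
  have h4 : √(2 + √2 ^ 2) = 2 := by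
    rw [sq_sqrt zero_le_two, sqrt_eq_iff_eq_sq (by norm_num) zero_le_two]; norm_num
  have h8 : √(2 + 3 * √2 ^ 2) = 2 * √2 := by
    rw [sq_sqrt zero_le_two, sqrt_eq_iff_eq_sq (by norm_num) (by positivity), mul_pow,
      sq_sqrt zero_le_two]; norm_num
  rw [priceOfAdaptation, h4, h8, sq_sqrt zero_le_two]
  ring

/-- The price of adaptation `r(c) = √(2+c²)(c+√(2+3c²))/(2(1+c²))` attains its maximum
value `√2` at `c = √2`: `r(√2) = √2` and `r(c) ≤ √2` for all `c > 0`. -/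
theorem priceOfAdaptation_max :
    priceOfAdaptation (Real.sqrt 2) = Real.sqrt 2 ∧
    ∀ c : ℝ, 0 < c → priceOfAdaptation c ≤ Real.sqrt 2 :=
  ⟨priceOfAdaptation_sqrt_two, fun c _ => priceOfAdaptation_le_sqrt_two c⟩
end
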